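/- arXiv:2203.09969 — 5 statements merged into one kernel-verified Lean document; each statement's English description precedes it below -/
import Mathlib

section
/- Assume n0 > 5f0. If the detection condition (with window w and threshold n0 − 2f0) holds at receiver j1 at time t1 and at receiver j2 at time t2, where t1 ≤ t2 (j1 and j2 may coincide), then either t2 − t1 ≤ w + δd or t2 − t1 ≥ ε − δd − w; i.e., the gap t2 − t1 never lies in the open interval (w + δd, ε − δd − w). -/
/-!
Two satisfactions of the detection condition involve at least `n0 - 2f0` senders each, and
since `2 (n0 - 2f0) > n0 + f0` when `n0 > 5f0`, some nonfaulty sender is counted by both.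
Its two receptions, one in each window, belong to pulses `k₁, k₂`. If `k₂ ≤ k₁` the windows
are at most `w + δd` apart; otherwise the pulses are at least `ε` apart, and so are the windows
up to `δd + w`.
-/

open Finset Set

theorem exists_mem_inter_notMem_of_card_lt {α : Type*} [Fintype α] [DecidableEq α]
    {D₁ D₂ F : Finset α} (h : Fintype.card α + #F < #D₁ + #D₂) :
    ∃ i ∈ D₁ ∩ D₂, i ∉ F := by
  have hunion : #(D₁ ∪ D₂) ≤ Fintype.card α := card_le_univ _
  have hinter := card_union_add_card_inter D₁ D₂
  have hsdiff : #(D₁ ∩ D₂) - #F ≤ #((D₁ ∩ D₂) \ F) := le_card_sdiff F _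
  obtain ⟨i, hi⟩ : ((D₁ ∩ D₂) \ F).Nonempty := card_pos.mp (by omega)
  exact ⟨i, (mem_sdiff.mp hi).1, (mem_sdiff.mp hi).2⟩

theorem Monotone.le_or_add_le_of_forall_le_sub_succ {p : ℕ → ℝ} {ε : ℝ} (hp : Monotone p)
    (hsep : ∀ k, ε ≤ p (k + 1) - p k) (k₁ k₂ : ℕ) : p k₂ ≤ p k₁ ∨ p k₁ + ε ≤ p k₂ := by
  rcases le_or_gt k₂ k₁ with hk | hk
  · exact Or.inl (hp hk)
  · exact Or.inr (by linarith [hsep k₁, hp (Nat.succ_le_of_lt hk)])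

theorem window_gap_le_or_ge {p : ℕ → ℝ} {ε δ w t₁ t₂ r₁ r₂ : ℝ} (hp : Monotone p)
    (hsep : ∀ k, ε ≤ p (k + 1) - p k)
    (hr₁ : ∃ k, r₁ ∈ Icc (p k) (p k + δ)) (hr₂ : ∃ k, r₂ ∈ Icc (p k) (p k + δ))
    (ht₁ : r₁ ∈ Icc (t₁ - w) t₁) (ht₂ : r₂ ∈ Icc (t₂ - w) t₂) :
    t₂ - t₁ ≤ w + δ ∨ ε - δ - w ≤ t₂ - t₁ := by
  obtain ⟨k₁, hk₁⟩ := hr₁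
  obtain ⟨k₂, hk₂⟩ := hr₂
  rcases hp.le_or_add_le_of_forall_le_sub_succ hsep k₁ k₂ with hk | hk
  · left; linarith [hk₁.1, hk₂.2, ht₁.2, ht₂.1]
  · right; linarith [hk₁.2, hk₂.1, ht₁.1, ht₂.2]

theorem stmt_1_general {J : Type*}
    (n0 f0 : ℕ) (ε δd w : ℝ)
    (hn : n0 > 5 * f0)
    (F : Finset (Fin n0)) (hF : F.card ≤ f0)
    (p : Fin n0 → ℕ → ℝ)
    (hmono : ∀ i ∉ F, StrictMono (p i))
    (hsep : ∀ i ∉ F, ∀ k : ℕ, ε ≤ p i (k + 1) - p i k)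
    (R : Fin n0 → J → Set ℝ)
    (hsound : ∀ i ∉ F, ∀ j : J, ∀ r ∈ R i j,
      ∃ k : ℕ, r ∈ Set.Icc (p i k) (p i k + δd))
    (j1 j2 : J) (t1 t2 : ℝ)
    (h1 : ∃ D : Finset (Fin n0), n0 - 2 * f0 ≤ D.card ∧
      ∀ i ∈ D, (R i j1 ∩ Set.Icc (t1 - w) t1).Nonempty)
    (h2 : ∃ D : Finset (Fin n0), n0 - 2 * f0 ≤ D.card ∧
      ∀ i ∈ D, (R i j2 ∩ Set.Icc (t2 - w) t2).Nonempty) :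
    t2 - t1 ≤ w + δd ∨ ε - δd - w ≤ t2 - t1 := by
  obtain ⟨D₁, hD₁card, hD₁⟩ := h1
  obtain ⟨D₂, hD₂card, hD₂⟩ := h2
  have hcard : Fintype.card (Fin n0) + #F < #D₁ + #D₂ := by
    rw [Fintype.card_fin]; omega
  obtain ⟨i, hi, hiF⟩ := exists_mem_inter_notMem_of_card_lt hcard
  obtain ⟨r₁, hr₁R, hr₁⟩ := hD₁ i (mem_inter.mp hi).1
  obtain ⟨r₂, hr₂R, hr₂⟩ := hD₂ i (mem_inter.mp hi).2
  exact window_gap_le_or_ge (hmono i hiF).monotone (hsep i hiF)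
    (hsound i hiF j1 r₁ hr₁R) (hsound i hiF j2 r₂ hr₂R) hr₁ hr₂

/-- Timing core of the paper's Lemma 2: the separation of two satisfactions of the
pulse-detection condition (window `w`, threshold `n0 - 2*f0`) never lies in the open
interval `(w + δd, ε - δd - w)`. -/
theorem stmt_1 {J : Type*} [Nonempty J]
    (n0 f0 : ℕ) (ε δd w : ℝ) (hε : 0 ≤ ε) (hδd : 0 ≤ δd) (hw : 0 ≤ w)
    (hn : n0 > 5 * f0)
    (F : Finset (Fin n0)) (hF : F.card ≤ f0)
    (p : Fin n0 → ℕ → ℝ)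
    (hmono : ∀ i ∉ F, StrictMono (p i))
    (hsep : ∀ i ∉ F, ∀ k : ℕ, ε ≤ p i (k + 1) - p i k)
    (R : Fin n0 → J → Set ℝ)
    (hsound : ∀ i ∉ F, ∀ j : J, ∀ r ∈ R i j,
      ∃ k : ℕ, r ∈ Set.Icc (p i k) (p i k + δd))
    (j1 j2 : J) (t1 t2 : ℝ) (hle : t1 ≤ t2)
    (h1 : ∃ D : Finset (Fin n0), n0 - 2 * f0 ≤ D.card ∧
      ∀ i ∈ D, (R i j1 ∩ Set.Icc (t1 - w) t1).Nonempty)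
    (h2 : ∃ D : Finset (Fin n0), n0 - 2 * f0 ≤ D.card ∧
      ∀ i ∈ D, (R i j2 ∩ Set.Icc (t2 - w) t2).Nonempty) :
    t2 - t1 ≤ w + δd ∨ ε - δd - w ≤ t2 - t1 :=
  stmt_1_general n0 f0 ε δd w hn F hF p hmono hsep R hsound j1 j2 t1 t2 h1 h2
end

section
/- Let σ1, σ2, t0 be real numbers with 0 ≤ σ1 and 2σ1 ≤ σ2. Let J be a finite nonempty index set and for each j ∈ J let A_j ⊆ ℝ be a finite set of 'satisfaction times'. Assume: (separation) for all j, j' ∈ J and all a ∈ A_j, a' ∈ A_{j'} with a ≤ a', the gap a' − a does not lie in the interval (σ1, σ2]; and (occurrence) for every j ∈ J there exists a_j ∈ A_j with t0 ≤ a_j ≤ t0 + σ2. Then there exists t* ∈ [t0, t0 + σ1 + σ2] such that for every j ∈ J there exists t_j* ∈ A_j with t* − σ1 ≤ t_j* ≤ t*. -/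
lemma le_of_le_of_notMem_Ioc {x σ1 σ2 : ℝ} (hx : x ≤ σ2) (h : x ∉ Set.Ioc σ1 σ2) : x ≤ σ1 :=
  not_lt.mp fun hlt => h ⟨hlt, hx⟩

/-- The latest of the window witnesses is the end of the cluster: every other witness precedes
it by at most `σ2`, hence, by the gap condition, by at most `σ1`. -/
theorem stmt_2_general (σ1 σ2 t0 : ℝ) (hσ1 : 0 ≤ σ1)
    {J : Type*} [Fintype J] [Nonempty J] (A : J → Finset ℝ)
    (hsep : ∀ j j' : J, ∀ a ∈ A j, ∀ a' ∈ A j', a ≤ a' → a' - a ∉ Set.Ioc σ1 σ2)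
    (hocc : ∀ j : J, ∃ a ∈ A j, t0 ≤ a ∧ a ≤ t0 + σ2) :
    ∃ tstar : ℝ, tstar ∈ Set.Icc t0 (t0 + σ1 + σ2) ∧
      ∀ j : J, ∃ tj ∈ A j, tstar - σ1 ≤ tj ∧ tj ≤ tstar := by
  choose c hcA hc_ge hc_le using hocc
  obtain ⟨j0, hj0⟩ := Finite.exists_max c
  refine ⟨c j0, ⟨hc_ge j0, by linarith [hc_le j0]⟩, fun j => ⟨c j, hcA j, ?_, hj0 j⟩⟩
  have hwin : c j0 - c j ≤ σ2 := by linarith [hc_ge j, hc_le j0]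
  have hclose := le_of_le_of_notMem_Ioc hwin (hsep j j0 (c j) (hcA j) (c j0) (hcA j0) (hj0 j))
  linarith

/-- Timing core of the paper's Lemma 3: if the satisfaction times of every node occur
within a window of length `σ2`, and gaps between any two satisfaction times never lie
in `(σ1, σ2]`, then all nodes have satisfaction times clustered in a common subwindow
of length `σ1` ending at some `t* ∈ [t0, t0 + σ1 + σ2]`. -/
theorem stmt_2 (σ1 σ2 t0 : ℝ) (hσ1 : 0 ≤ σ1) (hσ2 : 2 * σ1 ≤ σ2)
    {J : Type*} [Fintype J] [Nonempty J] (A : J → Finset ℝ)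
    (hsep : ∀ j j' : J, ∀ a ∈ A j, ∀ a' ∈ A j', a ≤ a' → a' - a ∉ Set.Ioc σ1 σ2)
    (hocc : ∀ j : J, ∃ a ∈ A j, t0 ≤ a ∧ a ≤ t0 + σ2) :
    ∃ tstar : ℝ, tstar ∈ Set.Icc t0 (t0 + σ1 + σ2) ∧
      ∀ j : J, ∃ tj ∈ A j, tstar - σ1 ≤ tj ∧ tj ≤ tstar :=
  stmt_2_general σ1 σ2 t0 hσ1 A hsep hocc
end

section
/- Suppose that at some receiver j0 ∈ J and time t ∈ ℝ, at least n0 − f0 senders i ∈ V0 satisfy R_{i,j0} ∩ [t − w', t] ≠ ∅, for some w' ≥ 0. Then there exists a set P ⊆ V0 \ F of nonfaulty senders with |P| ≥ n0 − 2f0 such that, setting t0' = t − w' − δd, for every receiver j ∈ J there exists a time t_j ∈ [t0', t0' + w' + 2δd] with R_{i,j} ∩ [t_j − (w' + 2δd), t_j] ≠ ∅ for every i ∈ P. In particular, the detection condition with window w' + 2δd and threshold n0 − 2f0 holds at every receiver at some time in [t − w' − δd, t + δd]. -/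
/-!
Every sender of the observed set `D` outside `F` is nonfaulty, and there are at least
`n0 - 2 f0` of them. A reception from such a sender at `j0` inside `[t - w', t]` belongs to a
pulse sent in `[t - w' - δd, t]`, and that same pulse reaches every receiver within
`[t - w' - δd, t + δd]`, a window of length `w' + 2 δd` ending at `t + δd`.
-/

open Set

theorem sub_two_mul_le_card_sdiff {α : Type*} [DecidableEq α] {D F : Finset α} {n f : ℕ}
    (hD : n - f ≤ D.card) (hF : F.card ≤ f) : n - 2 * f ≤ (D \ F).card := by
  have := Finset.card_le_card_sdiff_add_card (s := D) (t := F)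
  omega

theorem inter_Icc_nonempty_of_pulse {q : ℕ → ℝ} {δ a b : ℝ} {A B : Set ℝ}
    (hA : ∀ r ∈ A, ∃ k, r ∈ Icc (q k) (q k + δ))
    (hB : ∀ k, (B ∩ Icc (q k) (q k + δ)).Nonempty)
    (h : (A ∩ Icc a b).Nonempty) : (B ∩ Icc (a - δ) (b + δ)).Nonempty := by
  obtain ⟨r, hrA, hra, hrb⟩ := h
  obtain ⟨k, hkr, hrk⟩ := hA r hrA
  obtain ⟨s, hsB, hks, hsk⟩ := hB k
  exact ⟨s, hsB, by linarith, by linarith⟩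

theorem stmt_3_general {J : Type*}
    (n0 f0 : ℕ) (δd : ℝ) (hδd : 0 ≤ δd)
    (F : Finset (Fin n0)) (hF : F.card ≤ f0)
    (p : Fin n0 → ℕ → ℝ)
    (R : Fin n0 → J → Set ℝ)
    (hsound : ∀ i ∉ F, ∀ j : J, ∀ r ∈ R i j,
      ∃ k : ℕ, r ∈ Set.Icc (p i k) (p i k + δd))
    (hcomplete : ∀ i ∉ F, ∀ k : ℕ, ∀ j : J,
      (R i j ∩ Set.Icc (p i k) (p i k + δd)).Nonempty)
    (j0 : J) (t w' : ℝ) (hw' : 0 ≤ w')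
    (hobs : ∃ D : Finset (Fin n0), n0 - f0 ≤ D.card ∧
      ∀ i ∈ D, (R i j0 ∩ Set.Icc (t - w') t).Nonempty) :
    ∃ P : Finset (Fin n0), (∀ i ∈ P, i ∉ F) ∧ n0 - 2 * f0 ≤ P.card ∧
      ∀ j : J, ∃ tj ∈ Set.Icc (t - w' - δd) (t - w' - δd + (w' + 2 * δd)),
        ∀ i ∈ P, (R i j ∩ Set.Icc (tj - (w' + 2 * δd)) tj).Nonempty := by
  obtain ⟨D, hD, hDobs⟩ := hobs
  refine ⟨D \ F, fun i hi => (Finset.mem_sdiff.mp hi).2, sub_two_mul_le_card_sdiff hD hF, fun j => ?_⟩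
  refine ⟨t + δd, ⟨by linarith, by linarith⟩, fun i hi => ?_⟩
  obtain ⟨hiD, hiF⟩ := Finset.mem_sdiff.mp hi
  have hwindow : t + δd - (w' + 2 * δd) = t - w' - δd := by ring
  rw [hwindow]
  exact inter_Icc_nonempty_of_pulse (hsound i hiF j0) (fun k => hcomplete i hiF k j) (hDobs i hiD)

/-- First half of the proof of the paper's Lemma 4: a pulsing clique observed by one
nonfaulty node with threshold `n0 - f0` (window `w'`) is observed, with threshold
`n0 - 2*f0` and window `w' + 2*δd`, by every receiver within a narrow common window. -/
theorem stmt_3 {J : Type*} [Nonempty J]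
    (n0 f0 : ℕ) (ε δd w : ℝ) (hε : 0 ≤ ε) (hδd : 0 ≤ δd) (hw : 0 ≤ w)
    (hn : n0 > 5 * f0)
    (F : Finset (Fin n0)) (hF : F.card ≤ f0)
    (p : Fin n0 → ℕ → ℝ)
    (hmono : ∀ i ∉ F, StrictMono (p i))
    (hsep : ∀ i ∉ F, ∀ k : ℕ, ε ≤ p i (k + 1) - p i k)
    (R : Fin n0 → J → Set ℝ)
    (hsound : ∀ i ∉ F, ∀ j : J, ∀ r ∈ R i j,
      ∃ k : ℕ, r ∈ Set.Icc (p i k) (p i k + δd))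
    (hcomplete : ∀ i ∉ F, ∀ k : ℕ, ∀ j : J,
      (R i j ∩ Set.Icc (p i k) (p i k + δd)).Nonempty)
    (j0 : J) (t w' : ℝ) (hw' : 0 ≤ w')
    (hobs : ∃ D : Finset (Fin n0), n0 - f0 ≤ D.card ∧
      ∀ i ∈ D, (R i j0 ∩ Set.Icc (t - w') t).Nonempty) :
    ∃ P : Finset (Fin n0), (∀ i ∈ P, i ∉ F) ∧ n0 - 2 * f0 ≤ P.card ∧
      ∀ j : J, ∃ tj ∈ Set.Icc (t - w' - δd) (t - w' - δd + (w' + 2 * δd)),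
        ∀ i ∈ P, (R i j ∩ Set.Icc (tj - (w' + 2 * δd)) tj).Nonempty :=
  stmt_3_general n0 f0 δd hδd F hF p R hsound hcomplete j0 t w' hw' hobs
end

section
/- Let n, f ∈ ℕ with n > 3f, let a ≤ b be reals, let S ⊆ Fin n with |S| ≥ n − f, and let x, y : Fin n → ℝ be such that for every i ∈ S, x(i) = y(i) and x(i) ∈ [a, b]. Then |FTA_f(x) − FTA_f(y)| ≤ (b − a)/2. -/
/-- The `k`-th smallest value (0-based index) of a tuple `v : Fin n → ℝ`:
entry `k` of a monotone sorting of the values of `v`. -/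
noncomputable def kthSmallest {n : ℕ} (v : Fin n → ℝ) (k : Fin n) : ℝ :=
  (v ∘ Tuple.sort v) k

open Finset in
lemma kth_filter_lt_card {n : ℕ} (v : Fin n → ℝ) (k : Fin n) :
    (Finset.univ.filter (fun i => v i < kthSmallest v k)).card ≤ (k : ℕ) := by
  classical
  have hsub : (Finset.univ.filter (fun i => v i < kthSmallest v k)) ⊆
      Finset.image (Tuple.sort v) (Finset.Iio k) := by
    intro i hi
    simp only [Finset.mem_filter] at hi
    refine Finset.mem_image.mpr ⟨(Tuple.sort v)⁻¹ i, ?_, by simp⟩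
    simp only [Finset.mem_Iio]
    by_contra h
    push_neg at h
    have := Tuple.monotone_sort v h
    simp only [Function.comp_apply, Equiv.Perm.inv_def, Equiv.apply_symm_apply] at this
    exact absurd hi.2 (not_lt.mpr this)
  calc _ ≤ (Finset.image (Tuple.sort v) (Finset.Iio k)).card := Finset.card_le_card hsub
    _ ≤ (Finset.Iio k).card := Finset.card_image_le
    _ = k := Fin.card_Iio k

open Finset in
lemma kth_filter_gt_card {n : ℕ} (v : Fin n → ℝ) (k : Fin n) :
    (Finset.univ.filter (fun i => kthSmallest v k < v i)).card ≤ n - 1 - (k : ℕ) := by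
  classical
  have hsub : (Finset.univ.filter (fun i => kthSmallest v k < v i)) ⊆
      Finset.image (Tuple.sort v) (Finset.Ioi k) := by
    intro i hi
    simp only [Finset.mem_filter] at hi
    refine Finset.mem_image.mpr ⟨(Tuple.sort v)⁻¹ i, ?_, by simp⟩
    simp only [Finset.mem_Ioi]
    by_contra h
    push_neg at h
    have := Tuple.monotone_sort v h
    simp only [Function.comp_apply, Equiv.Perm.inv_def, Equiv.apply_symm_apply] at this
    exact absurd hi.2 (not_lt.mpr this)
  calc _ ≤ (Finset.image (Tuple.sort v) (Finset.Ioi k)).card := Finset.card_le_card hsub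
    _ ≤ (Finset.Ioi k).card := Finset.card_image_le
    _ = n - 1 - k := Fin.card_Ioi k

/-- There exists an element of S with v i ≤ kthSmallest, provided |S| > n-1-k. -/
lemma exists_le_kth {n : ℕ} (v : Fin n → ℝ) (k : Fin n) (S : Finset (Fin n))
    (h : n - 1 - (k : ℕ) < S.card) : ∃ i ∈ S, v i ≤ kthSmallest v k := by
  classical
  by_contra hc
  push_neg at hc
  have hsub : S ⊆ Finset.univ.filter (fun i => kthSmallest v k < v i) := by
    intro i hi; simp [hc i hi]
  have := Finset.card_le_card hsub
  have := kth_filter_gt_card v k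
  omega

lemma exists_ge_kth {n : ℕ} (v : Fin n → ℝ) (k : Fin n) (S : Finset (Fin n))
    (h : (k : ℕ) < S.card) : ∃ i ∈ S, kthSmallest v k ≤ v i := by
  classical
  by_contra hc
  push_neg at hc
  have hsub : S ⊆ Finset.univ.filter (fun i => v i < kthSmallest v k) := by
    intro i hi; simp [hc i hi]
  have := Finset.card_le_card hsub
  have := kth_filter_lt_card v k
  omega

/-- Key crossing lemma: kthSmallest x ⟨f⟩ ≤ kthSmallest y ⟨n-f-1⟩. -/
lemma cross_le (n f : ℕ) (hn : 3 * f < n)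
    (S : Finset (Fin n)) (hS : n - f ≤ S.card)
    (x y : Fin n → ℝ) (hagree : ∀ i ∈ S, x i = y i) :
    kthSmallest x ⟨f, by have := hn; omega⟩ ≤ kthSmallest y ⟨n - f - 1, by have := hn; omega⟩ := by
  classical
  by_contra hc
  push_neg at hc
  -- P : i ∈ S with y i ≤ y_{n-f-1}
  have hPc : n - 2 * f ≤ (S.filter (fun i => y i ≤ kthSmallest y ⟨n - f - 1, by omega⟩)).card := by
    have h1 : (S.filter (fun i => kthSmallest y ⟨n - f - 1, by omega⟩ < y i)).card ≤ f := by
      have hsub : S.filter (fun i => kthSmallest y ⟨n - f - 1, by omega⟩ < y i) ⊆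
          Finset.univ.filter (fun i => kthSmallest y ⟨n - f - 1, by omega⟩ < y i) := by
        intro i hi; simp only [Finset.mem_filter] at hi ⊢; exact ⟨Finset.mem_univ i, hi.2⟩
      have := Finset.card_le_card hsub
      have h2 := kth_filter_gt_card y ⟨n - f - 1, by omega⟩
      simp only at h2
      omega
    have := Finset.card_filter_add_card_filter_not
      (s := S) (p := fun i => y i ≤ kthSmallest y ⟨n - f - 1, by omega⟩)
    have heq : S.filter (fun i => ¬ y i ≤ kthSmallest y ⟨n - f - 1, by omega⟩) =
        S.filter (fun i => kthSmallest y ⟨n - f - 1, by omega⟩ < y i) := by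
      apply Finset.filter_congr; intro i _; simp [not_le]
    rw [heq] at this
    omega
  -- but P ⊆ {i | x i < x_f}
  have hsub : S.filter (fun i => y i ≤ kthSmallest y ⟨n - f - 1, by omega⟩) ⊆ Finset.univ.filter (fun i => x i < kthSmallest x ⟨f, by omega⟩) := by
    intro i hi
    simp only [Finset.mem_filter] at hi
    simp only [Finset.mem_filter]
    exact ⟨Finset.mem_univ i, by rw [hagree i hi.1]; exact lt_of_le_of_lt hi.2 hc⟩
  have h3 := Finset.card_le_card hsub
  have h4 := kth_filter_lt_card x ⟨f, by omega⟩
  simp only at h4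
  omega

lemma kth_mem_Icc (n f : ℕ) (hn : 3 * f < n) (a b : ℝ)
    (S : Finset (Fin n)) (hS : n - f ≤ S.card)
    (x : Fin n → ℝ) (hval : ∀ i ∈ S, x i ∈ Set.Icc a b) (k : Fin n)
    (hk1 : f ≤ (k : ℕ)) (hk2 : (k : ℕ) ≤ n - f - 1) :
    kthSmallest x k ∈ Set.Icc a b := by
  constructor
  · obtain ⟨i, hi, hle⟩ := exists_le_kth x k S (by omega)
    exact le_trans (hval i hi).1 hle
  · obtain ⟨i, hi, hge⟩ := exists_ge_kth x k S (by omega)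
    exact le_trans hge (hval i hi).2

/-- Convergence (contraction rate 1/2) of approximate agreement: two input vectors
agreeing on at least `n - f` entries, all lying in `[a, b]`, have fault-tolerant
averages `FTA_f = (·_(f+1) + ·_(n−f))/2` at most `(b - a)/2` apart. -/
theorem stmt_9 (n f : ℕ) (hn : 3 * f < n) (a b : ℝ) (hab : a ≤ b)
    (S : Finset (Fin n)) (hS : n - f ≤ S.card)
    (x y : Fin n → ℝ)
    (hagree : ∀ i ∈ S, x i = y i) (hval : ∀ i ∈ S, x i ∈ Set.Icc a b) :
    |(kthSmallest x ⟨f, by omega⟩ + kthSmallest x ⟨n - f - 1, by omega⟩) / 2 -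
      (kthSmallest y ⟨f, by omega⟩ + kthSmallest y ⟨n - f - 1, by omega⟩) / 2|
      ≤ (b - a) / 2 := by
  have hvaly : ∀ i ∈ S, y i ∈ Set.Icc a b := fun i hi => (hagree i hi) ▸ hval i hi
  have hagree' : ∀ i ∈ S, y i = x i := fun i hi => (hagree i hi).symm
  have hc1 := cross_le n f hn S hS x y hagree
  have hc2 := cross_le n f hn S hS y x hagree'
  have hx1 := kth_mem_Icc n f hn a b S hS x hval ⟨f, by omega⟩ (by simp) (by simp; omega)
  have hx2 := kth_mem_Icc n f hn a b S hS x hval ⟨n - f - 1, by omega⟩ (by simp; omega) (by simp)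
  have hy1 := kth_mem_Icc n f hn a b S hS y hvaly ⟨f, by omega⟩ (by simp) (by simp; omega)
  have hy2 := kth_mem_Icc n f hn a b S hS y hvaly ⟨n - f - 1, by omega⟩ (by simp; omega) (by simp)
  rw [abs_le]
  obtain ⟨hx1a, hx1b⟩ := hx1
  obtain ⟨hx2a, hx2b⟩ := hx2
  obtain ⟨hy1a, hy1b⟩ := hy1
  obtain ⟨hy2a, hy2b⟩ := hy2
  constructor <;> nlinarith [hc1, hc2]
end

section
/- Let n, f ∈ ℕ with n > 2f, let a ≤ b be reals and γ ≥ 0, let S ⊆ Fin n with |S| ≥ n − f, let v : Fin n → ℝ with v(i) ∈ [a, b] for every i ∈ S, and let x, y : Fin n → ℝ satisfy |x(i) − v(i)| ≤ γ and |y(i) − v(i)| ≤ γ for every i ∈ S. Let med(x) denote the (⌊n/2⌋ + 1)-th smallest value of x. Then |med(x) − med(y)| ≤ (b − a) + 2γ. -/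
lemma kthSmallest_lower {n : ℕ} (w : Fin n → ℝ) (k : Fin n) (c : ℝ) (G : Finset (Fin n))
    (hG : n ≤ G.card + k) (h : ∀ i ∈ G, c ≤ w i) : c ≤ kthSmallest w k := by
  by_contra hlt
  push_neg at hlt
  set σ := Tuple.sort w
  have hmap : (Finset.Iic k).image σ ⊆ Gᶜ := by
    intro i hi
    simp only [Finset.mem_image, Finset.mem_Iic] at hi
    obtain ⟨j, hj, rfl⟩ := hi
    have : w (σ j) ≤ w (σ k) := Tuple.monotone_sort w hj
    simp only [Finset.mem_compl]
    intro hmem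
    exact absurd (lt_of_le_of_lt this hlt) (not_lt.2 (h _ hmem))
  have hcard : (Finset.Iic k).card ≤ Gᶜ.card := by
    calc (Finset.Iic k).card = ((Finset.Iic k).image σ).card :=
          (Finset.card_image_of_injective _ σ.injective).symm
      _ ≤ Gᶜ.card := Finset.card_le_card hmap
  rw [Fin.card_Iic, Finset.card_compl, Fintype.card_fin] at hcard
  omega

lemma kthSmallest_upper {n : ℕ} (w : Fin n → ℝ) (k : Fin n) (c : ℝ) (G : Finset (Fin n))
    (hG : k < G.card) (h : ∀ i ∈ G, w i ≤ c) : kthSmallest w k ≤ c := by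
  by_contra hlt
  push_neg at hlt
  set σ := Tuple.sort w
  have hmap : (Finset.Ici k).image σ ⊆ Gᶜ := by
    intro i hi
    simp only [Finset.mem_image, Finset.mem_Ici] at hi
    obtain ⟨j, hj, rfl⟩ := hi
    have : w (σ k) ≤ w (σ j) := Tuple.monotone_sort w hj
    simp only [Finset.mem_compl]
    intro hmem
    exact absurd (lt_of_lt_of_le hlt this) (not_lt.2 (h _ hmem))
  have hcard : (Finset.Ici k).card ≤ Gᶜ.card := by
    calc (Finset.Ici k).card = ((Finset.Ici k).image σ).card :=
          (Finset.card_image_of_injective _ σ.injective).symm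
      _ ≤ Gᶜ.card := Finset.card_le_card hmap
  rw [Fin.card_Ici, Finset.card_compl, Fintype.card_fin] at hcard
  have hk := k.isLt
  omega

lemma med_mem {n f : ℕ} (hn : 2 * f < n) {a b γ : ℝ} (hγ : 0 ≤ γ)
    {S : Finset (Fin n)} (hS : n - f ≤ S.card)
    {v : Fin n → ℝ} (hv : ∀ i ∈ S, v i ∈ Set.Icc a b)
    {x : Fin n → ℝ} (hx : ∀ i ∈ S, |x i - v i| ≤ γ) :
    a - γ ≤ kthSmallest x ⟨n / 2, Nat.div_lt_self (by omega) (by norm_num)⟩ ∧ kthSmallest x ⟨n / 2, Nat.div_lt_self (by omega) (by norm_num)⟩ ≤ b + γ := by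
  have hxb : ∀ i ∈ S, a - γ ≤ x i ∧ x i ≤ b + γ := by
    intro i hi
    have h1 := (hv i hi).1
    have h2 := (hv i hi).2
    have h3 := abs_le.1 (hx i hi)
    constructor <;> linarith [h3.1, h3.2]
  constructor
  · exact kthSmallest_lower x _ _ S (by simp; omega) (fun i hi => (hxb i hi).1)
  · exact kthSmallest_upper x _ _ S (by simp; omega) (fun i hi => (hxb i hi).2)

/-- Median spread bound (step `δ7' = δ5' + 2δ6'` in the paper's Lemma 1): with
`n > 2f` readings of which at least `n - f` approximate (within `γ`) nonfaulty
values lying in `[a, b]`, any two medians (the `(⌊n/2⌋ + 1)`-th smallest values)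
are within `(b - a) + 2γ` of each other. -/
theorem stmt_11 (n f : ℕ) (hn : 2 * f < n) (a b γ : ℝ) (hab : a ≤ b) (hγ : 0 ≤ γ)
    (S : Finset (Fin n)) (hS : n - f ≤ S.card)
    (v : Fin n → ℝ) (hv : ∀ i ∈ S, v i ∈ Set.Icc a b)
    (x y : Fin n → ℝ)
    (hx : ∀ i ∈ S, |x i - v i| ≤ γ) (hy : ∀ i ∈ S, |y i - v i| ≤ γ) :
    |kthSmallest x ⟨n / 2, by omega⟩ - kthSmallest y ⟨n / 2, by omega⟩|
      ≤ (b - a) + 2 * γ := by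
  obtain ⟨hx1, hx2⟩ := med_mem hn hγ hS hv hx
  obtain ⟨hy1, hy2⟩ := med_mem hn hγ hS hv hy
  rw [abs_le]
  constructor <;> linarith
end
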